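/- arXiv:1210.0377 — 2 statements merged into one kernel-verified Lean document; each statement's English description precedes it below -/
import Mathlib

section
/- For the staircase partition λ_n = (n, n−1, ..., 1, 0) in n+1 variables, all roots z of the univariate polynomial s_{kλ_n}(z, 1, 1, ..., 1) = 0 lie on the unit circle, for every positive integer k and every n. -/
open scoped BigOperators

/-- A partition: a weakly decreasing sequence of naturals that is eventually zero. -/
def IsPartition (f : ℕ → ℕ) : Prop :=
  (∀ i j, i ≤ j → f j ≤ f i) ∧ ∃ N, ∀ i, N ≤ i → f i = 0

/-- Data of a (skew) filling with entries bounded by `n`: the inner shape `inner`, and for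
each row the weakly increasing list of its entries.  The outer shape of the filling is
`inner i + (row i).length`, so skew boxes sit to the left of all entries of a row. -/
structure SkewTab (n : ℕ) where
  inner : ℕ → ℕ
  row : ℕ → List ℕ

namespace SkewTab

variable {n : ℕ}

/-- The outer shape. -/
def outer (T : SkewTab n) : ℕ → ℕ := fun i => T.inner i + (T.row i).length

/-- The entry in row `i`, column `j` (0-indexed); meaningful for `inner i ≤ j < outer i`. -/
def entry (T : SkewTab n) (i j : ℕ) : ℕ := (T.row i).getD (j - T.inner i) 0

/-- `T` is a semistandard Young tableau of skew shape `outer/inner` with entries in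
`{1,…,n}`: both shapes are partitions, rows are weakly increasing and columns are
strictly increasing. -/
def IsSSYT (T : SkewTab n) : Prop :=
  IsPartition T.inner ∧ IsPartition T.outer ∧
  (∀ i, (T.row i).Pairwise (· ≤ ·)) ∧
  (∀ i, ∀ x ∈ T.row i, 1 ≤ x ∧ x ≤ n) ∧
  (∀ i j, T.inner i ≤ j → j < T.outer i → T.inner (i+1) ≤ j → j < T.outer (i+1) →
    T.entry i j < T.entry (i+1) j)

/-- Tableau insertion `T1 ⊠ T2`: concatenate corresponding rows and sort each row
weakly increasingly; the skew boxes (inner shapes) add up and are pushed to the left,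
i.e. treated as smaller than all numbered entries. -/
def ins (T1 T2 : SkewTab n) : SkewTab n where
  inner := fun i => T1.inner i + T2.inner i
  row := fun i => (T1.row i ++ T2.row i).mergeSort (fun a b => decide (a ≤ b))

/-- The empty tableau. -/
def empty : SkewTab n := ⟨fun _ => 0, fun _ => []⟩

/-- The weight of `T`: `wt T k` is the number of boxes with entry `k`. -/
noncomputable def wt (T : SkewTab n) (k : ℕ) : ℕ := ∑ᶠ i, (T.row i).count k

/-- The `c`-th column of `T` (0-indexed), viewed as a single-column skew tableau
(keeping its skew boxes). -/
def col (T : SkewTab n) (c : ℕ) : SkewTab n where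
  inner := fun i => if c < T.inner i then 1 else 0
  row := fun i =>
    if T.inner i ≤ c ∧ c < T.outer i then [(T.row i).getD (c - T.inner i) 0] else []

end SkewTab

/-- The set of SSYTs of shape `mu/nu` with entries in `{1,…,n}`. -/
def Tabs (n : ℕ) (mu nu : ℕ → ℕ) : Set (SkewTab n) :=
  {T | T.IsSSYT ∧ T.inner = nu ∧ T.outer = mu}

/-- The monomial `x^w = x₁^{w₁} ⋯ xₙ^{wₙ}`. -/
noncomputable def xpow (n : ℕ) (w : Fin n → ℕ) : MvPolynomial (Fin n) ℤ :=
  ∏ k : Fin n, MvPolynomial.X k ^ w k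

/-- The monomial `x^{w(T)}` attached to a tableau `T` (variable `x_k` corresponds to
the entry `k ∈ {1,…,n}`). -/
noncomputable def xwt {n : ℕ} (T : SkewTab n) : MvPolynomial (Fin n) ℤ :=
  xpow n (fun k => T.wt ((k : ℕ) + 1))

/-- The skew Schur polynomial `s_{mu/nu}(x₁,…,xₙ) = Σ_T x^{w(T)}`. -/
noncomputable def schur (n : ℕ) (mu nu : ℕ → ℕ) : MvPolynomial (Fin n) ℤ :=
  ∑ᶠ T ∈ Tabs n mu nu, xwt T

/-- The Kostka number `K_{lam/mu,w}`: the number of SSYTs of shape `lam/mu` with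
entries in `{1,…,n}` and weight `w`. -/
noncomputable def kostka (n : ℕ) (lam mu : ℕ → ℕ) (w : Fin n → ℕ) : ℕ :=
  Nat.card {T : SkewTab n // T ∈ Tabs n lam mu ∧ ∀ k : Fin n, T.wt ((k : ℕ) + 1) = w k}

/-- The monomial symmetric polynomial `m_w`: the sum of `x^u` over the distinct
rearrangements `u` of `w`. -/
noncomputable def mSym (n : ℕ) (w : Fin n → ℕ) : MvPolynomial (Fin n) ℤ :=
  ∑ᶠ u ∈ {u : Fin n → ℕ | ∃ σ : Equiv.Perm (Fin n), u = w ∘ σ}, xpow n u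

/-- The characteristic polynomial `χ(t) = ∏_{T ∈ T^n_{mu/nu}} (t − x^{w(T)})`. -/
noncomputable def charPoly (n : ℕ) (mu nu : ℕ → ℕ) : Polynomial (MvPolynomial (Fin n) ℤ) :=
  ∏ᶠ T ∈ Tabs n mu nu, (Polynomial.X - Polynomial.C (xwt T))

/-- `mu/nu` sits inside `alpha/beta`: there is an injection `f` of column positions such
that for every row, column `j` of `mu/nu` has a cell (resp. a skew box) exactly when
column `f j` of `alpha/beta` does; i.e. every column of the diagram of `mu/nu` can be
found among the columns of the diagram of `alpha/beta`, counting multiplicities. -/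
def SitsInside (mu nu alpha beta : ℕ → ℕ) : Prop :=
  ∃ f : ℕ → ℕ, Function.Injective f ∧
    ∀ j i, ((nu i ≤ j ∧ j < mu i) ↔ (beta i ≤ f j ∧ f j < alpha i)) ∧
      (j < nu i ↔ f j < beta i)

/-!
Deleting the entries `n + 1` from a semistandard tableau of shape `l` leaves a tableau whose
shape `g` interlaces `l`; this gives the branching rule
`s_l(x₁, …, x_{n+1}) = ∑_g s_g(x₁, …, xₙ) x_{n+1} ^ (|l| - |g|)`.
The alternant `a_l = det (x_i ^ (l_c + n - 1 - c))` obeys the same recursion up to the factor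
`∏_{i ≤ n} (x_i - x_{n+1})`: column operations clear its last row, the remaining columns are
sums over the admissible values of `g_c`, and multilinearity of the determinant expands them.
Induction on the number of variables gives the bialternant formula
`s_l · ∏_{i<j} (x_i - x_j) = a_l`.

For `l = k δ` the alternant is the Vandermonde product in the variables `x_i ^ (k + 1)`, so
`s_{kδ} = ∏_{i<j} (x_i ^ k + x_i ^ (k - 1) x_j + ⋯ + x_j ^ k)`. At `(z, 1, …, 1)` the factors
are `k + 1` and `1 + z + ⋯ + z ^ k`, so a root satisfies `z ^ (k + 1) = 1`.
-/

open MvPolynomial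

notation "ν0" => (fun _ => 0 : ℕ → ℕ)

theorem isPartition_zero : IsPartition ν0 := ⟨fun _ _ _ => le_rfl, 0, fun _ _ => rfl⟩

/-! ### Tableaux of straight shape -/

theorem List.Pairwise.eq_filter_append_replicate {l : List ℕ} {n : ℕ}
    (hl : l.Pairwise (· ≤ ·)) (hb : ∀ x ∈ l, x ≤ n + 1) :
    l = l.filter (· ≤ n) ++ List.replicate (l.count (n + 1)) (n + 1) := by
  induction l with
  | nil => rfl
  | cons a t ih =>
    obtain ⟨ha, ht⟩ := List.pairwise_cons.mp hl
    by_cases han : a ≤ n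
    · have hne : a ≠ n + 1 := by omega
      simp [han, hne, ← ih ht fun x hx => hb x (List.mem_cons_of_mem a hx)]
    · have hall : ∀ x ∈ a :: t, x = n + 1 := by
        intro x hx
        have := hb x hx
        rcases List.mem_cons.mp hx with rfl | hx
        · omega
        · have := ha x hx; omega
      rw [List.filter_eq_nil_iff.mpr (by intro x hx; simp [hall x hx]), List.nil_append,
        List.count_eq_length.mpr (fun x hx => (hall x hx).symm)]
      exact List.eq_replicate_iff.mpr ⟨rfl, hall⟩

namespace SkewTab

variable {n : ℕ}

theorem ext {A B : SkewTab n} (hinner : A.inner = B.inner) (hrow : A.row = B.row) : A = B := by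
  cases A; cases B; congr

section StraightShape

variable {l : ℕ → ℕ} {T : SkewTab n} (hT : T ∈ Tabs n l ν0)
include hT

theorem isPartition_of_mem_tabs : IsPartition l := hT.2.2 ▸ hT.1.2.1

theorem shape_succ_le (i : ℕ) : l (i + 1) ≤ l i :=
  (isPartition_of_mem_tabs hT).1 i (i + 1) i.le_succ

theorem length_row (i : ℕ) : (T.row i).length = l i := by
  simpa [outer, hT.2.1] using congrFun hT.2.2 i

theorem row_sorted (i : ℕ) : (T.row i).Pairwise (· ≤ ·) := hT.1.2.2.1 i

theorem mem_row_bounds {i x : ℕ} (hx : x ∈ T.row i) : 1 ≤ x ∧ x ≤ n := hT.1.2.2.2.1 i x hx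

omit hT in
theorem entry_eq_getD (hinner : T.inner = ν0) (i j : ℕ) : T.entry i j = (T.row i).getD j 0 := by
  simp [entry, hinner]

theorem entry_mem_row {i j : ℕ} (hj : j < l i) : T.entry i j ∈ T.row i := by
  have hlen : j < (T.row i).length := (length_row hT i).symm ▸ hj
  rw [entry_eq_getD hT.2.1, List.getD_eq_getElem _ _ hlen]
  exact List.getElem_mem hlen

theorem entry_lt_entry_succ {i j : ℕ} (hj : j < l (i + 1)) :
    T.entry i j < T.entry (i + 1) j := by
  have hji : j < l i := hj.trans_le (shape_succ_le hT i)
  obtain ⟨⟨-, -, -, -, hcol⟩, hinner, houter⟩ := hT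
  exact hcol i j (by simp [hinner]) (by simpa [houter]) (by simp [hinner]) (by simpa [houter])

theorem succ_le_entry {i j : ℕ} (hj : j < l i) : i + 1 ≤ T.entry i j := by
  induction i generalizing j with
  | zero => exact (mem_row_bounds hT (entry_mem_row hT hj)).1
  | succ i ih =>
    have hji : j < l i := hj.trans_le (shape_succ_le hT i)
    have := entry_lt_entry_succ hT hj
    have := ih hji
    omega

theorem shape_eq_zero_of_le {i : ℕ} (hi : n ≤ i) : l i = 0 := by
  by_contra h
  have h1 := succ_le_entry hT (Nat.pos_of_ne_zero h)
  have h2 := (mem_row_bounds hT (entry_mem_row hT (Nat.pos_of_ne_zero h))).2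
  omega

theorem row_eq_nil_of_le {i : ℕ} (hi : n ≤ i) : T.row i = [] := by
  rw [← List.length_eq_zero_iff, length_row hT, shape_eq_zero_of_le hT hi]

theorem wt_eq_sum_range {B : ℕ} (hB : n ≤ B) (a : ℕ) :
    T.wt a = ∑ i ∈ Finset.range B, (T.row i).count a := by
  refine finsum_eq_sum_of_support_subset _ fun i hi => ?_
  by_contra hiB
  simp [row_eq_nil_of_le hT (hB.trans (by simpa using hiB))] at hi

end StraightShape

end SkewTab

open SkewTab in
theorem finite_tabs (n : ℕ) (l : ℕ → ℕ) : (Tabs n l ν0).Finite := by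
  let code : SkewTab n → Fin n → List (Fin (n + 1)) := fun T i =>
    (T.row i).map fun x => ⟨min x n, by omega⟩
  have hcode : code '' Tabs n l ν0 ⊆ {c | ∀ i : Fin n, c i ∈ {L | L.length = l i}} := by
    rintro _ ⟨T, hT, rfl⟩ i
    simp [code, length_row hT]
  have hinj : Set.InjOn code (Tabs n l ν0) := by
    intro T hT T' hT' hTT'
    refine SkewTab.ext (hT.2.1.trans hT'.2.1.symm) (funext fun i => ?_)
    by_cases hi : i < n
    · have decode : ∀ {S : SkewTab n}, S ∈ Tabs n l ν0 →
          (code S ⟨i, hi⟩).map Fin.val = S.row i := fun hS => by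
        refine (List.map_map ..).trans (List.map_congr_left fun x hx => ?_) |>.trans (List.map_id _)
        exact min_eq_left (mem_row_bounds hS hx).2
      rw [← decode hT, ← decode hT', congrFun hTT' ⟨i, hi⟩]
    · rw [row_eq_nil_of_le hT (not_lt.mp hi), row_eq_nil_of_le hT' (not_lt.mp hi)]
  exact ((Set.Finite.pi' fun i : Fin n => List.finite_length_eq (Fin (n + 1)) (l i)).subset hcode)
    |>.of_finite_image hinj

theorem schur_eq_sum (n : ℕ) (l : ℕ → ℕ) :
    schur n l ν0 = ∑ T ∈ (finite_tabs n l).toFinset, xwt T := by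
  rw [schur, ← finsum_mem_coe_finset, Set.Finite.coe_toFinset]

theorem schur_zero_shape (n : ℕ) : schur n ν0 ν0 = 1 := by
  have htabs : Tabs n ν0 ν0 = {SkewTab.empty} := by
    ext T
    refine ⟨fun hT => SkewTab.ext hT.2.1 (funext fun i => ?_), ?_⟩
    · exact List.length_eq_zero_iff.mp (SkewTab.length_row hT i)
    · rintro rfl
      refine ⟨⟨isPartition_zero, isPartition_zero, fun _ => List.Pairwise.nil,
        fun _ _ hx => absurd hx List.not_mem_nil, ?_⟩, rfl, rfl⟩
      intro i j _ hj
      simp [SkewTab.outer, SkewTab.empty] at hj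
  simp [schur, htabs, xwt, xpow, SkewTab.wt, SkewTab.empty]

/-! ### Branching rule -/

def IsHorizontalStrip (l μ : ℕ → ℕ) : Prop := ∀ i, l (i + 1) ≤ μ i ∧ μ i ≤ l i

theorem IsHorizontalStrip.antitone {l μ : ℕ → ℕ} (h : IsHorizontalStrip l μ) :
    Antitone μ :=
  antitone_nat_of_succ_le fun i => (h (i + 1)).2.trans (h i).1

theorem IsHorizontalStrip.isPartition_left {l μ : ℕ → ℕ} (h : IsHorizontalStrip l μ)
    (hμ : IsPartition μ) : IsPartition l := by
  refine ⟨antitone_nat_of_succ_le fun i => (h i).1.trans (h i).2, ?_⟩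
  obtain ⟨N, hN⟩ := hμ.2
  refine ⟨N + 1, fun i hi => ?_⟩
  obtain ⟨k, rfl⟩ : ∃ k, i = k + 1 := ⟨i - 1, by omega⟩
  exact Nat.eq_zero_of_le_zero ((h k).1.trans (hN k (by omega)).le)

namespace SkewTab

variable {n : ℕ} {l : ℕ → ℕ}

def truncate (T : SkewTab (n + 1)) : SkewTab n := ⟨ν0, fun i => (T.row i).filter (· ≤ n)⟩

def extend (l : ℕ → ℕ) (T : SkewTab n) : SkewTab (n + 1) :=
  ⟨ν0, fun i => T.row i ++ List.replicate (l i - (T.row i).length) (n + 1)⟩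

@[simp]
theorem truncate_row (T : SkewTab (n + 1)) (i : ℕ) :
    T.truncate.row i = (T.row i).filter (· ≤ n) := rfl

theorem truncate_outer (T : SkewTab (n + 1)) (i : ℕ) :
    T.truncate.outer i = ((T.row i).filter (· ≤ n)).length := by
  simp [outer, truncate]

section Truncate

variable {T : SkewTab (n + 1)} (hT : T ∈ Tabs (n + 1) l ν0)
include hT

theorem row_eq_truncate_append (i : ℕ) :
    T.row i = T.truncate.row i ++ List.replicate ((T.row i).count (n + 1)) (n + 1) :=
  (row_sorted hT i).eq_filter_append_replicate fun _ hx => (mem_row_bounds hT hx).2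

theorem shape_eq_truncate_outer_add_count (i : ℕ) :
    l i = T.truncate.outer i + (T.row i).count (n + 1) := by
  rw [← length_row hT i, truncate_outer]
  conv_lhs => rw [row_eq_truncate_append hT i]
  simp [truncate]

theorem entry_le_iff {i j : ℕ} (hj : j < l i) : T.entry i j ≤ n ↔ j < T.truncate.outer i := by
  have hsplit := shape_eq_truncate_outer_add_count hT i
  rw [entry_eq_getD hT.2.1, row_eq_truncate_append hT i, truncate_row]
  rw [truncate_outer] at hsplit ⊢
  by_cases hjt : j < ((T.row i).filter (· ≤ n)).length
  · rw [List.getD_append _ _ _ _ hjt, List.getD_eq_getElem _ _ hjt]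
    simpa [hjt] using (List.of_mem_filter (List.getElem_mem hjt))
  · rw [List.getD_append_right _ _ _ _ (not_lt.mp hjt),
      List.getD_eq_getElem _ _ (by simp; omega)]
    simp [hjt]

theorem truncate_outer_le (i : ℕ) : T.truncate.outer i ≤ l i := by
  rw [shape_eq_truncate_outer_add_count hT i]
  exact Nat.le_add_right _ _

theorem isHorizontalStrip_truncate_outer : IsHorizontalStrip l T.truncate.outer := by
  refine fun i => ⟨?_, truncate_outer_le hT i⟩
  rcases Nat.eq_zero_or_pos (l (i + 1)) with h0 | hpos
  · omega
  have hj : l (i + 1) - 1 < l (i + 1) := by omega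
  have hlt := entry_lt_entry_succ hT hj
  have hle := (mem_row_bounds hT (entry_mem_row hT hj)).2
  have := (entry_le_iff hT (hj.trans_le (shape_succ_le hT i))).mp (by omega)
  omega

theorem truncate_outer_succ_le (i : ℕ) : T.truncate.outer (i + 1) ≤ T.truncate.outer i := by
  rcases Nat.eq_zero_or_pos (T.truncate.outer (i + 1)) with h0 | hpos
  · omega
  have hj : T.truncate.outer (i + 1) - 1 < l (i + 1) :=
    (Nat.sub_lt hpos one_pos).trans_le (truncate_outer_le hT (i + 1))
  have hle := (entry_le_iff hT hj).mpr (Nat.sub_lt hpos one_pos)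
  have := (entry_le_iff hT (hj.trans_le (shape_succ_le hT i))).mp
    ((entry_lt_entry_succ hT hj).le.trans hle)
  omega

theorem truncate_outer_eq_zero_of_le {i : ℕ} (hi : n ≤ i) : T.truncate.outer i = 0 := by
  by_contra h
  have hj : 0 < l i := (Nat.pos_of_ne_zero h).trans_le (truncate_outer_le hT i)
  have := (entry_le_iff hT hj).mpr (Nat.pos_of_ne_zero h)
  have := succ_le_entry hT hj
  omega

theorem entry_truncate {i j : ℕ} (hj : j < T.truncate.outer i) :
    T.truncate.entry i j = T.entry i j := by
  rw [truncate_outer] at hj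
  rw [entry_eq_getD rfl, entry_eq_getD hT.2.1, row_eq_truncate_append hT i, truncate_row,
    List.getD_append _ _ _ _ hj]

theorem truncate_mem_tabs : T.truncate ∈ Tabs n T.truncate.outer ν0 := by
  refine ⟨⟨isPartition_zero, ⟨?_, n, ?_⟩, ?_, ?_, ?_⟩, rfl, rfl⟩
  · exact antitone_nat_of_succ_le (truncate_outer_succ_le hT)
  · exact fun i hi => truncate_outer_eq_zero_of_le hT hi
  · exact fun i => (row_sorted hT i).sublist List.filter_sublist
  · intro i x hx
    obtain ⟨hmem, hxn⟩ := List.mem_filter.mp hx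
    exact ⟨(mem_row_bounds hT hmem).1, by simpa using hxn⟩
  · intro i j _ hj _ hj'
    rw [entry_truncate hT hj, entry_truncate hT hj']
    exact entry_lt_entry_succ hT (hj'.trans_le (truncate_outer_le hT (i + 1)))

theorem extend_truncate : T.truncate.extend l = T := by
  refine SkewTab.ext hT.2.1.symm (funext fun i => ?_)
  have hlen := shape_eq_truncate_outer_add_count hT i
  rw [truncate_outer] at hlen
  conv_rhs => rw [row_eq_truncate_append hT i]
  simp only [extend, truncate]
  congr 2
  omega

end Truncate

section Extend

variable {μ : ℕ → ℕ} {T : SkewTab n} (hT : T ∈ Tabs n μ ν0)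
include hT

theorem extend_outer (hμ : IsHorizontalStrip l μ) : (T.extend l).outer = l := by
  funext i
  simp [outer, extend, length_row hT, (hμ i).2]

theorem entry_extend_of_lt {i j : ℕ} (hj : j < μ i) : (T.extend l).entry i j = T.entry i j := by
  rw [entry_eq_getD rfl, entry_eq_getD hT.2.1]
  exact List.getD_append _ _ _ _ (by rwa [length_row hT])

theorem entry_extend_of_le {i j : ℕ} (hj : μ i ≤ j) (hjl : j < l i) :
    (T.extend l).entry i j = n + 1 := by
  rw [entry_eq_getD rfl]
  simp only [extend]
  rw [List.getD_append_right _ _ _ _ (by rwa [length_row hT]),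
    List.getD_eq_getElem _ _ (by simp [length_row hT]; omega)]
  simp

theorem extend_mem_tabs (hμ : IsHorizontalStrip l μ) : T.extend l ∈ Tabs (n + 1) l ν0 := by
  refine ⟨⟨isPartition_zero, ?_, fun i => ?_, fun i x hx => ?_, ?_⟩,
    rfl, extend_outer hT hμ⟩
  · rw [extend_outer hT hμ]
    exact hμ.isPartition_left (isPartition_of_mem_tabs hT)
  · refine List.pairwise_append.mpr ⟨row_sorted hT i, List.pairwise_replicate.mpr (.inr le_rfl),
      fun x hx y hy => ?_⟩
    rw [List.eq_of_mem_replicate hy]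
    exact (mem_row_bounds hT hx).2.trans n.le_succ
  · rcases List.mem_append.mp hx with hx | hx
    · have := mem_row_bounds hT hx
      omega
    · rw [List.eq_of_mem_replicate hx]
      omega
  · intro i j _ hj _ hj'
    rw [extend_outer hT hμ] at hj hj'
    have hjμ : j < μ i := hj'.trans_le (hμ i).1
    rw [entry_extend_of_lt hT hjμ]
    by_cases hjμ' : j < μ (i + 1)
    · rw [entry_extend_of_lt hT hjμ']
      exact entry_lt_entry_succ hT hjμ'
    · rw [entry_extend_of_le hT (not_lt.mp hjμ') hj']
      exact Nat.lt_succ_of_le (mem_row_bounds hT (entry_mem_row hT hjμ)).2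

theorem truncate_extend (l : ℕ → ℕ) : (T.extend l).truncate = T := by
  refine SkewTab.ext hT.2.1.symm (funext fun i => ?_)
  simp only [truncate, extend, List.filter_append]
  rw [List.filter_eq_self.mpr fun x hx => by simpa using (mem_row_bounds hT hx).2,
    List.filter_eq_nil_iff.mpr fun x hx => by simp [List.eq_of_mem_replicate hx], List.append_nil]

end Extend

end SkewTab

def extendByZero (n : ℕ) (g : Fin n → ℕ) : ℕ → ℕ :=
  fun i => if h : i < n then g ⟨i, h⟩ else 0

def interlacing (n : ℕ) (l : ℕ → ℕ) : Finset (Fin n → ℕ) :=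
  Fintype.piFinset fun c => Finset.Icc (l (c + 1)) (l c)

-- `|l| - |g|`, the number of entries `n + 1` in a tableau of shape `l` that truncates to shape `g`
def stripSize (n : ℕ) (l : ℕ → ℕ) (g : Fin n → ℕ) : ℕ :=
  l n + ∑ c : Fin n, (l c - g c)

theorem mem_interlacing {n : ℕ} {l : ℕ → ℕ} {g : Fin n → ℕ} :
    g ∈ interlacing n l ↔ ∀ c : Fin n, l (c + 1) ≤ g c ∧ g c ≤ l c := by
  simp [interlacing]

theorem isHorizontalStrip_extendByZero {n : ℕ} {l : ℕ → ℕ} {g : Fin n → ℕ}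
    (hs : ∀ i, n + 1 ≤ i → l i = 0) (hg : g ∈ interlacing n l) :
    IsHorizontalStrip l (extendByZero n g) := by
  intro i
  by_cases hi : i < n
  · simpa [extendByZero, hi] using mem_interlacing.mp hg ⟨i, hi⟩
  · simp [extendByZero, hi, hs (i + 1) (by omega)]

namespace SkewTab

variable {n : ℕ} {l : ℕ → ℕ} {T : SkewTab (n + 1)} (hT : T ∈ Tabs (n + 1) l ν0)
include hT

theorem truncate_outer_mem_interlacing :
    (fun c : Fin n => T.truncate.outer c) ∈ interlacing n l :=
  mem_interlacing.mpr fun c => isHorizontalStrip_truncate_outer hT c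

theorem extendByZero_truncate_outer :
    extendByZero n (fun c : Fin n => T.truncate.outer c) = T.truncate.outer := by
  funext i
  by_cases hi : i < n
  · simp [extendByZero, hi]
  · simp [extendByZero, hi, truncate_outer_eq_zero_of_le hT (not_lt.mp hi)]

theorem wt_truncate {a : ℕ} (ha : a ≤ n) : T.truncate.wt a = T.wt a := by
  rw [wt_eq_sum_range (truncate_mem_tabs hT) n.le_succ, wt_eq_sum_range hT le_rfl]
  exact Finset.sum_congr rfl fun i _ => List.count_filter (by simpa using ha)

theorem wt_succ_eq_stripSize :
    T.wt (n + 1) = stripSize n l (fun c : Fin n => T.truncate.outer c) := by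
  have hcount : ∀ i, (T.row i).count (n + 1) = l i - T.truncate.outer i := fun i => by
    rw [shape_eq_truncate_outer_add_count hT i]; omega
  rw [wt_eq_sum_range hT le_rfl, Finset.sum_congr rfl fun i _ => hcount i, Finset.sum_range_succ,
    truncate_outer_eq_zero_of_le hT le_rfl, ← Fin.sum_univ_eq_sum_range, stripSize]
  omega

theorem xwt_eq_rename_xwt_truncate_mul :
    xwt T = rename Fin.castSucc (xwt T.truncate) *
      X (Fin.last n) ^ stripSize n l (fun c : Fin n => T.truncate.outer c) := by
  rw [xwt, xwt, xpow, xpow, map_prod, Fin.prod_univ_castSucc, Fin.val_last, wt_succ_eq_stripSize hT]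
  congr 1
  refine Finset.prod_congr rfl fun k _ => ?_
  rw [map_pow, rename_X, Fin.val_castSucc, wt_truncate hT k.isLt]

end SkewTab

open SkewTab in
theorem schur_succ_eq_sum_interlacing {n : ℕ} {l : ℕ → ℕ}
    (hs : ∀ i, n + 1 ≤ i → l i = 0) :
    schur (n + 1) l ν0 = ∑ g ∈ interlacing n l,
      rename Fin.castSucc (schur n (extendByZero n g) ν0) * X (Fin.last n) ^ stripSize n l g := by
  simp_rw [schur_eq_sum, map_sum, Finset.sum_mul]
  rw [Finset.sum_sigma']
  refine Finset.sum_nbij' (fun T => ⟨fun c : Fin n => T.truncate.outer c, T.truncate⟩)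
    (fun p => p.2.extend l) ?_ ?_ ?_ ?_ ?_
  · intro T hT
    rw [Set.Finite.mem_toFinset] at hT
    simpa [extendByZero_truncate_outer hT, truncate_outer_mem_interlacing hT]
      using truncate_mem_tabs hT
  · rintro ⟨g, T⟩ hgT
    simp only [Finset.mem_sigma, Set.Finite.mem_toFinset] at hgT ⊢
    exact extend_mem_tabs hgT.2 (isHorizontalStrip_extendByZero hs hgT.1)
  · intro T hT
    exact extend_truncate ((Set.Finite.mem_toFinset _).mp hT)
  · rintro ⟨g, T⟩ hgT
    simp only [Finset.mem_sigma, Set.Finite.mem_toFinset] at hgT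
    rw [truncate_extend hgT.2]
    simp [hgT.2.2.2, extendByZero]
  · intro T hT
    exact xwt_eq_rename_xwt_truncate_mul ((Set.Finite.mem_toFinset _).mp hT)

/-! ### Alternants -/

section Determinants

variable {R : Type*} [CommRing R]

theorem sub_mul_sum_Icc_pow_mul_pow (x y : R) {a b : ℕ} (e : ℕ) (hab : a ≤ b) :
    (x - y) * ∑ m ∈ Finset.Icc a b, x ^ (m + e) * y ^ (b - m) =
      x ^ (b + e + 1) - y ^ (b - a + 1) * x ^ (a + e) := by
  have hshift : ∑ m ∈ Finset.Icc a b, x ^ (m + e) * y ^ (b - m) =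
      x ^ (a + e) * ∑ m ∈ Finset.range (b - a + 1), x ^ m * y ^ (b - a + 1 - 1 - m) := by
    rw [← Finset.Ico_add_one_right_eq_Icc, Finset.sum_Ico_eq_sum_range, Finset.mul_sum,
      show b + 1 - a = b - a + 1 by omega]
    refine Finset.sum_congr rfl fun m hm => ?_
    rw [Finset.mem_range] at hm
    rw [← mul_assoc, ← pow_add, show b - (a + m) = b - a + 1 - 1 - m by omega]
    ring_nf
  rw [hshift, mul_left_comm, mul_comm (x - y), geom_sum₂_mul, mul_sub, ← pow_add,
    show a + e + (b - a + 1) = b + e + 1 by omega, mul_comm]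

namespace Matrix

theorem det_eq_of_forall_col_eq_smul_add_succ {n : ℕ} {A B : Matrix (Fin (n + 1)) (Fin (n + 1)) R}
    (c : Fin n → R) (A_last : ∀ i, A i (Fin.last n) = B i (Fin.last n))
    (A_castSucc : ∀ i (j : Fin n), A i j.castSucc = B i j.castSucc + c j * A i j.succ) :
    det A = det B := by
  have hrev : det (A.submatrix id Fin.revPerm) = det (B.submatrix id Fin.revPerm) :=
    det_eq_of_forall_col_eq_smul_add_pred (fun j => c j.rev) (fun i => by simpa using A_last i)
      fun i j => by simpa [Fin.rev_succ, Fin.rev_castSucc] using A_castSucc i j.rev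
  rw [det_permute', det_permute'] at hrev
  have hsign := congrArg ((Equiv.Perm.sign (Fin.revPerm (n := n + 1)) : R) * ·) hrev
  simp only [← mul_assoc, ← Int.cast_mul, ← Units.val_mul, Int.units_mul_self] at hsign
  simpa using hsign

theorem det_succ_of_last_row_eq_zero {n : ℕ} (A : Matrix (Fin (n + 1)) (Fin (n + 1)) R)
    (h : ∀ j : Fin n, A (Fin.last n) j.castSucc = 0) :
    det A = A (Fin.last n) (Fin.last n) * det (A.submatrix Fin.castSucc Fin.castSucc) := by
  rw [det_succ_row A (Fin.last n), Fin.sum_univ_castSucc]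
  simp [h, Fin.succAbove_last]

theorem det_of_sum_col {ι n : Type*} [Fintype n] [DecidableEq n] (s : n → Finset ι)
    (v : n → ι → n → R) :
    det (of fun i j => ∑ m ∈ s j, v j m i) =
      ∑ r ∈ Fintype.piFinset s, det (of fun i j => v j (r j) i) := by
  have hcols : (of fun i j => ∑ m ∈ s j, v j m i)ᵀ = fun j => ∑ m ∈ s j, v j m := by
    ext j i
    simp [Finset.sum_apply]
  rw [← det_transpose, hcols]
  simp_rw [← det_transpose (of fun i j => v j _ i)]
  have h := (detRowAlternating : (n → R) [⋀^n]→ₗ[R] R).toMultilinearMap.map_sum_finset v s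
  simp only [AlternatingMap.coe_multilinearMap] at h
  exact h

end Matrix

def diffProd {n : ℕ} (w : Fin n → R) : R := ∏ j, ∏ i, if i < j then w i - w j else 1

theorem diffProd_succ {n : ℕ} (w : Fin (n + 1) → R) :
    diffProd w =
      diffProd (w ∘ Fin.castSucc) * ∏ i : Fin n, (w i.castSucc - w (Fin.last n)) := by
  rw [diffProd, diffProd, Fin.prod_univ_castSucc]
  congr 1
  · refine Finset.prod_congr rfl fun j _ => ?_
    rw [Fin.prod_univ_castSucc, if_neg (Fin.castSucc_lt_last j).not_gt, mul_one]
    simp [Fin.castSucc_lt_castSucc_iff]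
  · rw [Fin.prod_univ_castSucc, if_neg (lt_irrefl _), mul_one]
    exact Finset.prod_congr rfl fun i _ => if_pos (Fin.castSucc_lt_last i)

theorem map_diffProd {S F : Type*} [CommRing S] [FunLike F R S] [RingHomClass F R S] {n : ℕ}
    (f : F) (w : Fin n → R) :
    f (diffProd w) = diffProd (f ∘ w) := by
  simp [diffProd, map_prod, apply_ite f]

theorem diffProd_pow_succ {R : Type*} [CommRing R] {n : ℕ} (w : Fin n → R) (k : ℕ) :
    diffProd (fun i => w i ^ (k + 1)) = diffProd w * ∏ j, ∏ i,
      if i < j then ∑ a ∈ Finset.range (k + 1), w i ^ a * w j ^ (k - a) else 1 := by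
  simp_rw [diffProd, ← Finset.prod_mul_distrib]
  refine Finset.prod_congr rfl fun j _ => Finset.prod_congr rfl fun i _ => ?_
  split_ifs
  · rw [← geom_sum₂_mul, mul_comm]
    simp
  · rw [mul_one]

end Determinants

section Alternant

variable {R : Type*} [CommRing R]

variable (R) in
noncomputable def alternant (n : ℕ) (l : ℕ → ℕ) : MvPolynomial (Fin n) R :=
  (Matrix.of fun i c : Fin n => (X i : MvPolynomial (Fin n) R) ^ (l c + (n - 1 - c))).det

-- The minor of `alternant R (n + 1) l` left by the column reduction, with `X i - X (Fin.last n)`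
-- taken out of row `i`.
variable (R) in
noncomputable def reducedAlternantMatrix (n : ℕ) (l : ℕ → ℕ) :
    Matrix (Fin n) (Fin n) (MvPolynomial (Fin (n + 1)) R) :=
  Matrix.of fun i c => ∑ m ∈ Finset.Icc (l (c + 1)) (l c),
    X i.castSucc ^ (m + (n - 1 - c)) * X (Fin.last n) ^ (l c - m)

theorem alternant_succ_eq_det_reducedAlternantMatrix {n : ℕ} {l : ℕ → ℕ}
    (hl : Antitone l) :
    alternant R (n + 1) l = X (Fin.last n) ^ l n *
      (∏ i : Fin n, (X i.castSucc - X (Fin.last n))) * (reducedAlternantMatrix R n l).det := by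
  set M : Matrix (Fin (n + 1)) (Fin (n + 1)) (MvPolynomial (Fin (n + 1)) R) :=
    Matrix.of fun i c => X i ^ (l c + (n - c))
  -- Subtracting `coef c` times column `c + 1` from column `c` clears the last row.
  let coef : Fin n → MvPolynomial (Fin (n + 1)) R :=
    fun c => X (Fin.last n) ^ (l c - l (c + 1) + 1)
  let B : Matrix (Fin (n + 1)) (Fin (n + 1)) (MvPolynomial (Fin (n + 1)) R) :=
    Matrix.of fun i =>
      Fin.lastCases (M i (Fin.last n)) fun c => M i c.castSucc - coef c * M i c.succ
  have hMB : M.det = B.det :=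
    Matrix.det_eq_of_forall_col_eq_smul_add_succ coef (fun i => by simp [B])
      (fun i c => by simp [B])
  have hexp : ∀ c : Fin n, l c + (n - c) = l c - l (c + 1) + 1 + (l (c + 1) + (n - (c + 1))) :=
    fun c => by have : l (c + 1) ≤ l c := hl (Nat.le_succ c); omega
  have hlast : ∀ c : Fin n, B (Fin.last n) c.castSucc = 0 := fun c => by
    simp [B, M, coef, ← pow_add, ← hexp]
  have hsub : B.submatrix Fin.castSucc Fin.castSucc =
      Matrix.of fun i c => (X i.castSucc - X (Fin.last n)) * reducedAlternantMatrix R n l i c := by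
    refine Matrix.ext fun i c => ?_
    simp only [B, M, coef, reducedAlternantMatrix, Matrix.submatrix_apply, Matrix.of_apply,
      Fin.lastCases_castSucc, Fin.val_castSucc, Fin.val_succ]
    rw [sub_mul_sum_Icc_pow_mul_pow _ _ _ (hl (Nat.le_succ c)),
      show l c + (n - c) = l c + (n - 1 - c) + 1 by omega,
      show l (c + 1) + (n - (c + 1)) = l (c + 1) + (n - 1 - c) by omega]
  rw [alternant, show n + 1 - 1 = n from rfl]
  change M.det = _
  rw [hMB, Matrix.det_succ_of_last_row_eq_zero B hlast, hsub, Matrix.det_mul_column]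
  simp [B, M, mul_assoc]

theorem det_reducedAlternantMatrix (n : ℕ) (l : ℕ → ℕ) :
    (reducedAlternantMatrix R n l).det = ∑ g ∈ interlacing n l,
      X (Fin.last n) ^ (∑ c : Fin n, (l c - g c)) *
        rename Fin.castSucc (alternant R n (extendByZero n g)) := by
  rw [reducedAlternantMatrix, Matrix.det_of_sum_col (fun c : Fin n => Finset.Icc (l (c + 1)) (l c))
    fun c m i => X i.castSucc ^ (m + (n - 1 - c)) * X (Fin.last n) ^ (l c - m)]
  refine Finset.sum_congr rfl fun g _ => ?_
  simp_rw [mul_comm (X _ ^ _) (X (Fin.last n) ^ _)]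
  refine (Matrix.det_mul_row (fun c : Fin n => X (Fin.last n) ^ (l c - g c))
    (Matrix.of fun i c : Fin n => (X i.castSucc : MvPolynomial (Fin (n + 1)) R) ^
      (g c + (n - 1 - c)))).trans ?_
  rw [Finset.prod_pow_eq_pow_sum, alternant, AlgHom.map_det]
  congr 2
  ext i c : 2
  simp [extendByZero]

end Alternant

theorem schur_mul_diffProd (n : ℕ) {l : ℕ → ℕ} (hl : Antitone l)
    (hs : ∀ i, n ≤ i → l i = 0) :
    schur n l ν0 * diffProd (X : Fin n → MvPolynomial (Fin n) ℤ) = alternant ℤ n l := by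
  induction n generalizing l with
  | zero =>
    obtain rfl : l = ν0 := funext fun i => hs i i.zero_le
    simp [schur_zero_shape, diffProd, alternant]
  | succ n ih =>
    have hdiff : diffProd (X : Fin (n + 1) → MvPolynomial (Fin (n + 1)) ℤ) =
        rename Fin.castSucc (diffProd X) * ∏ i : Fin n, (X i.castSucc - X (Fin.last n)) := by
      rw [diffProd_succ, map_diffProd]
      congr 2
      funext i
      simp
    rw [schur_succ_eq_sum_interlacing hs, hdiff,
      alternant_succ_eq_det_reducedAlternantMatrix hl,
      det_reducedAlternantMatrix, Finset.sum_mul, Finset.mul_sum]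
    refine Finset.sum_congr rfl fun g hg => ?_
    rw [← ih (isHorizontalStrip_extendByZero hs hg).antitone fun i hi => ?_, map_mul, stripSize,
      pow_add]
    · ring
    · simp [extendByZero, hi.not_gt]

theorem diffProd_X_ne_zero (n : ℕ) : diffProd (X : Fin n → MvPolynomial (Fin n) ℤ) ≠ 0 := by
  refine Finset.prod_ne_zero_iff.mpr fun j _ => Finset.prod_ne_zero_iff.mpr fun i _ => ?_
  split_ifs with hij
  · exact sub_ne_zero.mpr ((X_injective (R := ℤ)).ne hij.ne)
  · exact one_ne_zero

theorem diffProd_X_eq_alternant (n : ℕ) :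
    diffProd (X : Fin n → MvPolynomial (Fin n) ℤ) = alternant ℤ n ν0 := by
  simpa [schur_zero_shape] using schur_mul_diffProd n antitone_const fun _ _ => rfl

/-! ### Staircase shapes -/

theorem alternant_staircase (N k : ℕ) :
    alternant ℤ (N + 1) (fun i => k * (N - i)) =
      diffProd fun i => (X i : MvPolynomial _ ℤ) ^ (k + 1) := by
  have hsubst : (diffProd fun i : Fin (N + 1) => (X i : MvPolynomial (Fin (N + 1)) ℤ) ^ (k + 1)) =
      aeval (fun i => X i ^ (k + 1)) (diffProd (X : Fin (N + 1) → MvPolynomial _ ℤ)) := by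
    rw [map_diffProd]
    simp [Function.comp_def]
  rw [hsubst, diffProd_X_eq_alternant, alternant, alternant, AlgHom.map_det]
  congr 1
  refine Matrix.ext fun i c => ?_
  simp only [AlgHom.mapMatrix_apply, Matrix.map_apply, Matrix.of_apply, map_pow, aeval_X,
    ← pow_mul]
  congr 1
  simp only [add_tsub_cancel_right, zero_add]
  ring

theorem schur_staircase (N k : ℕ) :
    schur (N + 1) (fun i => k * (N - i)) ν0 = ∏ j : Fin (N + 1), ∏ i : Fin (N + 1),
      if i < j then ∑ a ∈ Finset.range (k + 1), (X i : MvPolynomial _ ℤ) ^ a * X j ^ (k - a)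
      else 1 := by
  have hanti : Antitone fun i => k * (N - i) := fun i j hij =>
    Nat.mul_le_mul_left k (Nat.sub_le_sub_left hij N)
  refine mul_right_cancel₀ (diffProd_X_ne_zero (N + 1)) ?_
  rw [schur_mul_diffProd _ hanti fun i hi => by simp [show N - i = 0 by omega],
    alternant_staircase, diffProd_pow_succ, mul_comm]

theorem norm_eq_one_of_geom_sum_eq_zero {z : ℂ} {k : ℕ}
    (h : ∑ a ∈ Finset.range (k + 1), z ^ a = 0) : ‖z‖ = 1 :=
  Complex.norm_eq_one_of_pow_eq_one (sub_eq_zero.mp (by rw [← geom_sum_mul, h, zero_mul]))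
    k.succ_ne_zero

theorem staircase_roots_on_unit_circle_general (N k : ℕ) (z : ℂ)
    (hz : MvPolynomial.aeval (fun i : Fin (N + 1) => if i = 0 then z else 1)
        (schur (N + 1) (fun i => k * (N - i)) (fun _ => 0)) = 0) :
    ‖z‖ = 1 := by
  rw [schur_staircase, map_prod] at hz
  obtain ⟨j, -, hj⟩ := Finset.prod_eq_zero_iff.mp hz
  rw [map_prod] at hj
  obtain ⟨i, -, hij⟩ := Finset.prod_eq_zero_iff.mp hj
  by_cases hlt : i < j
  · simp only [hlt, if_true, map_sum, map_mul, map_pow, aeval_X, Fin.ne_zero_of_lt hlt, if_false,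
      one_pow, mul_one] at hij
    by_cases hi0 : i = 0
    · simp only [hi0, if_true] at hij
      exact norm_eq_one_of_geom_sum_eq_zero hij
    · simp only [hi0, if_false, one_pow, Finset.sum_const, Finset.card_range, nsmul_one] at hij
      exact absurd hij (by exact_mod_cast k.succ_ne_zero)
  · simp [hlt] at hij

/-- For the staircase partition `λ_N = (N, N−1, …, 1, 0)` in `N+1`
variables, all complex roots of `s_{kλ_N}(z, 1, …, 1) = 0` lie on the unit circle,
for every positive integer `k`. -/
theorem staircase_roots_on_unit_circle (N k : ℕ) (hk : 0 < k) (z : ℂ)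
    (hz : MvPolynomial.aeval (fun i : Fin (N + 1) => if i = 0 then z else 1)
        (schur (N + 1) (fun i => k * (N - i)) (fun _ => 0)) = 0) :
    ‖z‖ = 1 :=
  staircase_roots_on_unit_circle_general N k z hz
end

section
/- Let μ ⊇ ν be partitions with μ ≠ ν and let T_1, ..., T_d be the SSYTs of shape μ/ν with entries in {1,...,n}. Then for j ≥ 1, every SSYT of shape jμ/jν with entries in {1,...,n} can be written as S ⊠ T for some T ∈ {T_1,...,T_d} and some SSYT S of shape (j−1)μ/(j−1)ν; moreover the multiset ⋃_i { S ⊠ T_i : S SSYT of shape (j−1)μ/(j−1)ν } contains each SSYT of shape jμ/jν at least once. -/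
open scoped BigOperators

/-!
Split the columns of `(k+1)μ/(k+1)ν` into consecutive blocks of `k + 1`. Keeping the first `k`
columns of every block leaves a diagram of shape `kμ/kν`, keeping the last one a diagram of
shape `μ/ν`, and since whole columns are kept, the restriction of an SSYT `U` to either set of
columns is again an SSYT. Row by row, the two restrictions together contain exactly the entries
of `U`, which is a sorted row; hence `U` is their insertion product.
-/

lemma IsPartition.const_mul {f : ℕ → ℕ} (hf : IsPartition f) (k : ℕ) :
    IsPartition fun i => k * f i := by
  obtain ⟨hanti, N, hN⟩ := hf
  exact ⟨fun i j hij => Nat.mul_le_mul_left k (hanti i j hij),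
    N, fun i hi => by simp [hN i hi]⟩

namespace SkewTab

variable {n : ℕ}

lemma row_eq_map_entry (T : SkewTab n) (i : ℕ) :
    T.row i = (List.range' (T.inner i) (T.row i).length).map (T.entry i) := by
  refine List.ext_getElem (by simp) fun p hp _ => ?_
  simp [entry, hp]

lemma entry_mem_row_s18 (T : SkewTab n) {i c : ℕ} (h₁ : T.inner i ≤ c) (h₂ : c < T.outer i) :
    T.entry i c ∈ T.row i := by
  have hc : c - T.inner i < (T.row i).length := by unfold outer at h₂; omega
  rw [entry, List.getD_eq_getElem _ _ hc]
  exact List.getElem_mem hc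

lemma entry_le_entry (T : SkewTab n) {i a b : ℕ} (hrow : (T.row i).Pairwise (· ≤ ·))
    (ha : T.inner i ≤ a) (hab : a ≤ b) (hb : b < T.outer i) : T.entry i a ≤ T.entry i b := by
  have hb' : b - T.inner i < (T.row i).length := by unfold outer at hb; omega
  have ha' : a - T.inner i < (T.row i).length := by omega
  rw [entry, entry, List.getD_eq_getElem _ _ ha', List.getD_eq_getElem _ _ hb']
  exact hrow.rel_get_of_le (a := ⟨_, ha'⟩) (b := ⟨_, hb'⟩) (by simp only [Fin.mk_le_mk]; omega)

lemma eq_ins_of_perm {S T U : SkewTab n} (hsorted : ∀ i, (U.row i).Pairwise (· ≤ ·))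
    (hinner : ∀ i, U.inner i = S.inner i + T.inner i)
    (hperm : ∀ i, (S.row i ++ T.row i).Perm (U.row i)) : U = S.ins T := by
  obtain ⟨inner, row⟩ := U
  simp only [ins, SkewTab.mk.injEq]
  refine ⟨funext hinner, funext fun i => ?_⟩
  exact (((List.mergeSort_perm _ _).trans (hperm i)).eq_of_pairwise'
    (List.pairwise_mergeSort' _ _) (hsorted i)).symm

def restrictCols (T : SkewTab n) (f : ℕ → ℕ) (α β : ℕ → ℕ) : SkewTab n where
  inner := α
  row i := (List.range' (α i) (β i - α i)).map (T.entry i ∘ f)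

variable (T : SkewTab n) (f : ℕ → ℕ) {α β : ℕ → ℕ}

lemma restrictCols_outer (hαβ : ∀ i, α i ≤ β i) : (T.restrictCols f α β).outer = β := by
  funext i
  simp only [outer, restrictCols, List.length_map, List.length_range']
  have := hαβ i
  omega

lemma restrictCols_entry {i c : ℕ} (h₁ : α i ≤ c) (h₂ : c < β i) :
    (T.restrictCols f α β).entry i c = T.entry i (f c) := by
  have hc : c - α i < β i - α i := by omega
  simp only [entry, restrictCols]
  rw [List.getD_eq_getElem _ _ (by simpa using hc)]
  simp only [List.getElem_map, List.getElem_range', Function.comp_apply]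
  congr 2
  omega

lemma isSSYT_restrictCols (hT : T.IsSSYT) (hα : IsPartition α) (hβ : IsPartition β)
    (hαβ : ∀ i, α i ≤ β i) (hf : Monotone f)
    (hcols : ∀ i c, c ∈ Set.Ico (α i) (β i) → f c ∈ Set.Ico (T.inner i) (T.outer i)) :
    (T.restrictCols f α β).IsSSYT := by
  obtain ⟨-, -, hsorted, hrange, hcolumn⟩ := hT
  refine ⟨hα, by rwa [restrictCols_outer T f hαβ], fun i => ?_, fun i x hx => ?_, ?_⟩
  · refine (List.pairwise_lt_range' (s := α i) (n := β i - α i)).imp_of_mem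
      (fun {a b} ha hb hab => ?_) |>.map _ (fun a b h => h)
    rw [List.mem_range'_1] at ha hb
    exact T.entry_le_entry (hsorted i) (hcols i a ⟨by omega, by omega⟩).1
      (hf hab.le) (hcols i b ⟨by omega, by omega⟩).2
  · obtain ⟨c, hc, rfl⟩ := List.mem_map.mp hx
    rw [List.mem_range'_1] at hc
    obtain ⟨h₁, h₂⟩ := hcols i c ⟨hc.1, by omega⟩
    exact hrange i _ (T.entry_mem_row_s18 h₁ h₂)
  · intro i c h₁ h₂ h₃ h₄
    change α i ≤ c at h₁
    change α (i + 1) ≤ c at h₃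
    rw [restrictCols_outer T f hαβ] at h₂ h₄
    rw [restrictCols_entry T f h₁ h₂, restrictCols_entry T f h₃ h₄]
    exact hcolumn i (f c) (hcols i c ⟨h₁, h₂⟩).1 (hcols i c ⟨h₁, h₂⟩).2
      (hcols (i + 1) c ⟨h₃, h₄⟩).1 (hcols (i + 1) c ⟨h₃, h₄⟩).2

end SkewTab

/-- Column `c` of `kμ/kν` becomes column `stretchHead k c` of `(k+1)μ/(k+1)ν`, one of the
first `k` columns of block `c / k`; column `c` of `μ/ν` becomes `stretchLast k c`, the last
column of block `c`. -/
def stretchHead (k c : ℕ) : ℕ := c + c / k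

def stretchLast (k c : ℕ) : ℕ := c * (k + 1) + k

lemma stretchHead_strictMono (k : ℕ) : StrictMono (stretchHead k) :=
  fun _ _ h => Nat.add_lt_add_of_lt_of_le h (Nat.div_le_div_right h.le)

lemma stretchLast_strictMono (k : ℕ) : StrictMono (stretchLast k) :=
  fun _ _ h => Nat.add_lt_add_right (Nat.mul_lt_mul_of_pos_right h k.succ_pos) k

lemma stretchHead_mem_Ico {k a b c : ℕ} (hc : c ∈ Set.Ico (k * a) (k * b)) :
    stretchHead k c ∈ Set.Ico ((k + 1) * a) ((k + 1) * b) := by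
  obtain ⟨h₁, h₂⟩ := hc
  have hk : 0 < k := Nat.pos_of_ne_zero (by rintro rfl; simp at h₂)
  have hqa : a ≤ c / k := (Nat.le_div_iff_mul_le hk).mpr (by linarith)
  have hqb : c / k < b := (Nat.div_lt_iff_lt_mul hk).mpr (by linarith)
  have hdiv := Nat.div_add_mod c k
  have hmod := Nat.mod_lt c hk
  constructor <;> simp only [stretchHead] <;> nlinarith

lemma stretchLast_mem_Ico {k a b c : ℕ} (hc : c ∈ Set.Ico a b) :
    stretchLast k c ∈ Set.Ico ((k + 1) * a) ((k + 1) * b) := by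
  obtain ⟨h₁, h₂⟩ := hc
  constructor <;> simp only [stretchLast] <;> nlinarith

lemma stretchHead_ne_stretchLast {k : ℕ} (hk : 0 < k) (c d : ℕ) :
    stretchHead k c ≠ stretchLast k d := by
  intro h
  have hhead : stretchHead k c % (k + 1) = c % k := by
    have hc : stretchHead k c = c / k * (k + 1) + c % k := by
      have := Nat.div_add_mod c k
      simp only [stretchHead]
      nlinarith
    rw [hc, Nat.mul_add_mod_self_right, Nat.mod_eq_of_lt (by have := Nat.mod_lt c hk; omega)]
  have hlast : stretchLast k d % (k + 1) = k := by
    rw [stretchLast, Nat.mul_add_mod_self_right, Nat.mod_eq_of_lt k.lt_succ_self]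
  rw [h, hlast] at hhead
  exact (Nat.mod_lt c hk).ne' hhead

lemma range'_stretch_perm (k a b : ℕ) :
    ((List.range' (k * a) (k * b - k * a)).map (stretchHead k) ++
      (List.range' a (b - a)).map (stretchLast k)).Perm
      (List.range' ((k + 1) * a) ((k + 1) * b - (k + 1) * a)) := by
  have hnodup : ((List.range' (k * a) (k * b - k * a)).map (stretchHead k) ++
      (List.range' a (b - a)).map (stretchLast k)).Nodup := by
    refine List.nodup_append.mpr
      ⟨(List.nodup_range' (s := k * a)).map (stretchHead_strictMono k).injective,
        (List.nodup_range' (s := a)).map (stretchLast_strictMono k).injective, ?_⟩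
    simp only [List.mem_map, List.mem_range'_1]
    rintro _ ⟨c, hc, rfl⟩ _ ⟨d, -, rfl⟩
    exact stretchHead_ne_stretchLast (Nat.pos_of_ne_zero (by rintro rfl; omega)) c d
  have hsub : ((List.range' (k * a) (k * b - k * a)).map (stretchHead k) ++
      (List.range' a (b - a)).map (stretchLast k)) ⊆
      List.range' ((k + 1) * a) ((k + 1) * b - (k + 1) * a) := by
    simp only [List.subset_def, List.mem_append, List.mem_map, List.mem_range'_1]
    rintro _ (⟨c, hc, rfl⟩ | ⟨c, hc, rfl⟩)
    · obtain ⟨h₁, h₂⟩ := stretchHead_mem_Ico (a := a) (b := b) ⟨hc.1, by omega⟩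
      exact ⟨h₁, by omega⟩
    · obtain ⟨h₁, h₂⟩ := stretchLast_mem_Ico (k := k) (a := a) (b := b) ⟨hc.1, by omega⟩
      exact ⟨h₁, by omega⟩
  refine (List.subperm_of_subset hnodup hsub).perm_of_length_le ?_
  simp only [List.length_append, List.length_map, List.length_range']
  rw [← Nat.mul_sub, ← Nat.mul_sub, Nat.succ_mul]

open SkewTab in
theorem tabs_stretched_decompose_general (n : ℕ) (mu nu : ℕ → ℕ)
    (hm : IsPartition mu) (hn : IsPartition nu) (hnm : ∀ i, nu i ≤ mu i)
    (j : ℕ) (hj : 1 ≤ j)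
    (U : SkewTab n) (hU : U ∈ Tabs n (fun i => j * mu i) (fun i => j * nu i)) :
    ∃ S T : SkewTab n,
      S ∈ Tabs n (fun i => (j - 1) * mu i) (fun i => (j - 1) * nu i) ∧
      T ∈ Tabs n mu nu ∧ U = S.ins T := by
  obtain ⟨k, rfl⟩ : ∃ k, j = k + 1 := ⟨j - 1, by omega⟩
  obtain ⟨hUssyt, hUin, hUout⟩ := hU
  have hkν : ∀ i, k * nu i ≤ k * mu i := fun i => Nat.mul_le_mul_left k (hnm i)
  refine ⟨U.restrictCols (stretchHead k) (fun i => k * nu i) (fun i => k * mu i),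
    U.restrictCols (stretchLast k) nu mu,
    ⟨U.isSSYT_restrictCols _ hUssyt (hn.const_mul k) (hm.const_mul k) hkν
      (stretchHead_strictMono k).monotone fun i c hc => ?_, rfl, restrictCols_outer _ _ hkν⟩,
    ⟨U.isSSYT_restrictCols _ hUssyt hn hm hnm
      (stretchLast_strictMono k).monotone fun i c hc => ?_, rfl, restrictCols_outer _ _ hnm⟩,
    eq_ins_of_perm hUssyt.2.2.1 (fun i => ?_) fun i => ?_⟩
  · simpa [hUin, hUout] using stretchHead_mem_Ico hc
  · simpa [hUin, hUout] using stretchLast_mem_Ico (k := k) hc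
  · simp [restrictCols, hUin, add_mul]
  · have hlen : (U.row i).length = (k + 1) * mu i - (k + 1) * nu i := by
      have := congrFun hUout i
      simp only [outer, hUin] at this
      omega
    rw [U.row_eq_map_entry i, hlen, hUin]
    simpa [restrictCols, List.map_append, List.map_map] using
      (range'_stretch_perm k (nu i) (mu i)).map (U.entry i)

/-- For `μ ⊋ ν` and `j ≥ 1`, every SSYT of shape `jμ/jν` with entries
in `{1,…,n}` can be written as `S ⊠ T` with `T` an SSYT of shape `μ/ν` and `S` an SSYT
of shape `(j−1)μ/(j−1)ν`; i.e. the multiset `⋃_T { S ⊠ T }` contains each SSYT of shape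
`jμ/jν` at least once. -/
theorem tabs_stretched_decompose (n : ℕ) (mu nu : ℕ → ℕ)
    (hm : IsPartition mu) (hn : IsPartition nu) (hnm : ∀ i, nu i ≤ mu i)
    (hne : mu ≠ nu) (j : ℕ) (hj : 1 ≤ j)
    (U : SkewTab n) (hU : U ∈ Tabs n (fun i => j * mu i) (fun i => j * nu i)) :
    ∃ S T : SkewTab n,
      S ∈ Tabs n (fun i => (j - 1) * mu i) (fun i => (j - 1) * nu i) ∧
      T ∈ Tabs n mu nu ∧ U = S.ins T :=
  tabs_stretched_decompose_general n mu nu hm hn hnm j hj U hU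
end
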